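/- arXiv:1911.13024 — 10 statements merged into one kernel-verified Lean document; each statement's English description precedes it below -/
import Mathlib

section
/- Let AF = (AR, Attacks) and AF' = (AR', Attacks') be argumentation frameworks with AF ≼_N AF', and let 𝒮 be a family of maximal conflict-free sets of AF and 𝒮' a family of maximal conflict-free sets of AF'. If for every E ∈ 𝒮 there exists E' ∈ 𝒮' with E ⊆ E' (the weak monotony condition), then for every E ∈ 𝒮 there exists E' ∈ 𝒮' such that E' ⊄ AR or E' = E (the weak reference independence condition). -/
/-- An (abstract) argumentation framework: a finite set of arguments
together with an attack relation on those arguments. -/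
structure ArgFramework (α : Type*) where
  args : Set α
  att : Set (α × α)
  args_finite : args.Finite
  att_sub : att ⊆ args ×ˢ args

namespace ArgFramework

variable {α : Type*}

/-- `S` is conflict-free: no member of `S` attacks a member of `S`. -/
def ConflictFree (F : ArgFramework α) (S : Set α) : Prop :=
  S ⊆ F.args ∧ ∀ a ∈ S, ∀ b ∈ S, (a, b) ∉ F.att

/-- `S` is a maximal (w.r.t. set inclusion) conflict-free set. -/
def MaxConflictFree (F : ArgFramework α) (S : Set α) : Prop :=
  F.ConflictFree S ∧ ∀ T, F.ConflictFree T → S ⊆ T → S = T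

/-- Naive extensions are exactly the maximal conflict-free sets. -/
def NaiveExt (F : ArgFramework α) (S : Set α) : Prop :=
  F.MaxConflictFree S

/-- The range of `S`: `S` together with all arguments attacked by `S`. -/
def range (F : ArgFramework α) (S : Set α) : Set α :=
  S ∪ {b | ∃ a ∈ S, (a, b) ∈ F.att}

/-- `S` is a stage extension: a conflict-free set whose range is maximal
(w.r.t. set inclusion) among ranges of conflict-free sets. -/
def StageExt (F : ArgFramework α) (S : Set α) : Prop :=
  F.ConflictFree S ∧ ¬ ∃ T, F.ConflictFree T ∧ F.range S ⊂ F.range T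

/-- `S` is admissible: conflict-free, and every attacker of a member of `S`
is attacked by some member of `S`. -/
def Admissible (F : ArgFramework α) (S : Set α) : Prop :=
  F.ConflictFree S ∧ ∀ a ∈ S, ∀ b, (b, a) ∈ F.att → ∃ c ∈ S, (c, b) ∈ F.att

/-- `S` is a maximal (w.r.t. set inclusion) admissible set. -/
def MaxAdmissible (F : ArgFramework α) (S : Set α) : Prop :=
  F.Admissible S ∧ ∀ T, F.Admissible T → S ⊆ T → S = T

/-- Preferred extensions are the maximal admissible sets. -/
def PreferredExt (F : ArgFramework α) (S : Set α) : Prop :=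
  F.MaxAdmissible S

/-- `a` is acceptable w.r.t. `S`: every attacker of `a` is attacked by `S`. -/
def Acceptable (F : ArgFramework α) (S : Set α) (a : α) : Prop :=
  ∀ b, (b, a) ∈ F.att → ∃ c ∈ S, (c, b) ∈ F.att

/-- `S` is a complete extension: admissible and containing every argument
acceptable w.r.t. `S`. -/
def CompleteExt (F : ArgFramework α) (S : Set α) : Prop :=
  F.Admissible S ∧ ∀ a ∈ F.args, F.Acceptable S a → a ∈ S

/-- `S` is the grounded extension: the minimal complete extension. -/
def GroundedExt (F : ArgFramework α) (S : Set α) : Prop :=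
  F.CompleteExt S ∧ ∀ T, F.CompleteExt T → S ⊆ T

/-- `S` is a stable extension: conflict-free and attacking every outside argument. -/
def StableExt (F : ArgFramework α) (S : Set α) : Prop :=
  F.ConflictFree S ∧ ∀ b ∈ F.args \ S, ∃ a ∈ S, (a, b) ∈ F.att

/-- `F'` is a normal expansion of `F`: arguments and attacks are only added,
and no added attack is between two arguments of `F`. -/
def NormalExpansion (F F' : ArgFramework α) : Prop :=
  F.args ⊆ F'.args ∧ F.att ⊆ F'.att ∧
    ∀ a b, (a, b) ∈ F'.att → (a, b) ∉ F.att → ¬(a ∈ F.args ∧ b ∈ F.args)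

/-- An attack sequence: a nonempty sequence of pairwise distinct arguments
in which each argument attacks its successor. -/
def AttackSeq (F : ArgFramework α) (l : List α) : Prop :=
  l ≠ [] ∧ l.Nodup ∧ (∀ a ∈ l, a ∈ F.args) ∧
    l.Chain' (fun a b => (a, b) ∈ F.att)

/-- `b` is reachable from `a`: there is an attack sequence from `a` to `b`. -/
def Reachable (F : ArgFramework α) (a b : α) : Prop :=
  ∃ l : List α, F.AttackSeq l ∧ l.head? = some a ∧ l.getLast? = some b

/-- An attack cycle: a sequence `a₁, …, aₙ` (n ≥ 2) of arguments in which each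
argument attacks its successor, `a₁ = aₙ`, and `a₁, …, a_{n-1}` are pairwise
distinct. -/
def AttackCycle (F : ArgFramework α) (l : List α) : Prop :=
  2 ≤ l.length ∧ (∀ a ∈ l, a ∈ F.args) ∧
    l.Chain' (fun a b => (a, b) ∈ F.att) ∧
    l.head? = l.getLast? ∧ l.dropLast.Nodup

/-- `F'` is a non-cyclic expansion of `F`: an expansion whose attack cycles
are exactly the attack cycles of `F`. -/
def NonCyclicExpansion (F F' : ArgFramework α) : Prop :=
  F.args ⊆ F'.args ∧ F.att ⊆ F'.att ∧
    ∀ l, F'.AttackCycle l ↔ F.AttackCycle l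

/-- `F'` is a rational man's expansion of `F`: a normal, non-cyclic expansion
such that no added argument reachable from an initial argument `a` allows `a`
to occur in any attack cycle of `F'`. -/
def RationalManExpansion (F F' : ArgFramework α) : Prop :=
  F.NormalExpansion F' ∧ F.NonCyclicExpansion F' ∧
    ∀ a ∈ F.args, ∀ b ∈ F'.args \ F.args, F'.Reachable a b →
      ∀ l, F'.AttackCycle l → a ∉ l

end ArgFramework

/-! A set `E' ⊇ E` of arguments of `AF'` that lies inside `AR` is conflict-free already in `AF`,
because the expansion only adds attacks; maximality of `E` in `AF` then forces `E' = E`. -/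

namespace ArgFramework

variable {α : Type*} {F F' : ArgFramework α}

theorem ConflictFree.of_att_subset (hatt : F.att ⊆ F'.att) {E : Set α}
    (hE : F'.ConflictFree E) (hargs : E ⊆ F.args) : F.ConflictFree E :=
  ⟨hargs, fun a ha b hb hab => hE.2 a ha b hb (hatt hab)⟩

theorem MaxConflictFree.not_subset_args_or_eq (hatt : F.att ⊆ F'.att) {E E' : Set α}
    (hE : F.MaxConflictFree E) (hE' : F'.ConflictFree E') (hsub : E ⊆ E') :
    ¬ E' ⊆ F.args ∨ E' = E := by
  by_cases hargs : E' ⊆ F.args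
  · exact Or.inr (hE.2 E' (hE'.of_att_subset hatt hargs) hsub).symm
  · exact Or.inl hargs

end ArgFramework

/-- For families of maximal conflict-free sets of `AF` and of a
normal expansion `AF'`, the weak monotony condition implies the weak
reference independence condition. -/
theorem weak_monotony_implies_weak_reference_independence
    {α : Type*} (F F' : ArgFramework α)
    (hN : F.NormalExpansion F')
    (S S' : Set (Set α))
    (hS : ∀ E ∈ S, F.MaxConflictFree E)
    (hS' : ∀ E' ∈ S', F'.MaxConflictFree E')
    (hWM : ∀ E ∈ S, ∃ E' ∈ S', E ⊆ E') :
    ∀ E ∈ S, ∃ E' ∈ S', ¬ E' ⊆ F.args ∨ E' = E := by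
  intro E hE
  obtain ⟨E', hE'S, hsub⟩ := hWM E hE
  exact ⟨E', hE'S, (hS E hE).not_subset_args_or_eq hN.2.1 (hS' E' hE'S).1 hsub⟩
end

section
/- There exist argumentation frameworks AF = (AR, Attacks) and AF' = (AR', Attacks') with AF ≼_N AF', together with nonempty families 𝒮 of maximal conflict-free sets of AF and 𝒮' of maximal conflict-free sets of AF', such that for every E ∈ 𝒮 there exists E' ∈ 𝒮' with E' ⊄ AR or E' = E (the weak reference independence condition holds), yet there exists E ∈ 𝒮 such that no E' ∈ 𝒮' satisfies E ⊆ E' (the weak monotony condition fails). A witness is AF = ({a}, ∅), AF' = ({a, b}, {(b, a)}), 𝒮 = {{a}}, 𝒮' = {{b}}. -/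
namespace ArgFramework

variable {α : Type*}

def singleton (a : α) : ArgFramework α where
  args := {a}
  att := ∅
  args_finite := Set.finite_singleton a
  att_sub := Set.empty_subset _

def ofAttack (b a : α) : ArgFramework α where
  args := {a, b}
  att := {(b, a)}
  args_finite := (Set.finite_singleton b).insert a
  att_sub := Set.singleton_subset_iff.2 ⟨by simp, by simp⟩

theorem StableExt.maxConflictFree {F : ArgFramework α} {S : Set α} (hS : F.StableExt S) :
    F.MaxConflictFree S := by
  refine ⟨hS.1, fun T hT hST => hST.antisymm fun x hxT => ?_⟩
  by_contra hxS
  obtain ⟨y, hyS, hyx⟩ := hS.2 x ⟨hT.1 hxT, hxS⟩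
  exact hT.2 y (hST hyS) x hxT hyx

theorem stableExt_singleton (a : α) : (singleton a).StableExt {a} :=
  ⟨⟨subset_rfl, fun _ _ _ _ h => h⟩, fun _ hb => absurd hb.1 hb.2⟩

theorem stableExt_ofAttack {a b : α} (hba : b ≠ a) : (ofAttack b a).StableExt {b} := by
  refine ⟨⟨by simp [ofAttack], ?_⟩, ?_⟩
  · rintro x rfl y rfl h
    exact hba (Prod.ext_iff.1 h).2
  · rintro x ⟨hx, hxb⟩
    obtain rfl : x = a := by simpa [ofAttack, hxb] using hx
    exact ⟨b, rfl, rfl⟩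

theorem normalExpansion_singleton_ofAttack {a b : α} (hba : b ≠ a) :
    (singleton a).NormalExpansion (ofAttack b a) := by
  refine ⟨by simp [singleton, ofAttack], Set.empty_subset _, ?_⟩
  rintro x y h - ⟨hx, -⟩
  obtain ⟨rfl, -⟩ := Prod.ext_iff.1 h
  exact hba hx

end ArgFramework

/-- Weak reference independence does not imply weak monotony:
there are a framework, a normal expansion, and nonempty families of maximal
conflict-free sets of each, satisfying the weak reference independence
condition but violating the weak monotony condition. -/
theorem weak_reference_independence_not_implies_weak_monotony :
    ∃ (F F' : ArgFramework ℕ) (S S' : Set (Set ℕ)),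
      F.NormalExpansion F' ∧
      S.Nonempty ∧ S'.Nonempty ∧
      (∀ E ∈ S, F.MaxConflictFree E) ∧
      (∀ E' ∈ S', F'.MaxConflictFree E') ∧
      (∀ E ∈ S, ∃ E' ∈ S', ¬ E' ⊆ F.args ∨ E' = E) ∧
      (∃ E ∈ S, ∀ E' ∈ S', ¬ E ⊆ E') := by
  refine ⟨.singleton 0, .ofAttack 1 0, {{0}}, {{1}},
    ArgFramework.normalExpansion_singleton_ofAttack one_ne_zero,
    Set.singleton_nonempty _, Set.singleton_nonempty _, ?_, ?_, ?_, ?_⟩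
  · rintro E rfl
    exact (ArgFramework.stableExt_singleton 0).maxConflictFree
  · rintro E' rfl
    exact (ArgFramework.stableExt_ofAttack one_ne_zero).maxConflictFree
  · rintro E rfl
    exact ⟨{1}, rfl, Or.inl (by simp [ArgFramework.singleton])⟩
  · exact ⟨{0}, rfl, by rintro E' rfl; simp⟩
end

section
/- There exist argumentation frameworks AF = (AR, Attacks) and AF' = (AR', Attacks') with AF ≼_N AF' such that, for stage semantics, the weak reference independence condition holds but the weak rational monotony condition fails; i.e., setting U = ⋃_{E' stage extension of AF'} (E' \ AR), for every stage extension E of AF there exists a stage extension E' of AF' with E' ⊄ AR or E' = E; yet there exists a stage extension E of AF such that no (a, b) ∈ Attacks' has a ∈ U and b ∈ E, and no stage extension E' of AF' satisfies E ⊆ E'. A witness is AF = ({c, d, e}, {(c, d), (d, e), (e, c)}) and AF' = ({c, d, e, f}, {(c, d), (d, e), (e, c), (f, d)}), whose stage extensions are {{c}, {d}, {e}} and {{e, f}} respectively, with E = {c}. -/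
/-!
In the odd cycle `c → d → e → c` no conflict-free set has full range, so `{c}`, whose range misses
only `e`, is a stage extension. Adding `f → d` makes `{e, f}` conflict-free with full range; hence
every stage extension of the expansion has full range, so it contains `d` or `e` in order to cover
`e`, and both conflict with `c`. Yet the new argument `f` attacks only `d`, not `c`.
-/

namespace ArgFramework

variable {α : Type*} {F : ArgFramework α} {S T : Set α}

theorem mem_range_iff {x : α} : x ∈ F.range S ↔ x ∈ S ∨ ∃ a ∈ S, (a, x) ∈ F.att := Iff.rfl

theorem ConflictFree.range_subset_args (hS : F.ConflictFree S) : F.range S ⊆ F.args := by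
  rintro x (hx | ⟨a, -, hax⟩)
  · exact hS.1 hx
  · exact (F.att_sub hax).2

theorem stageExt_of_range_eq_args (hS : F.ConflictFree S) (hrange : F.range S = F.args) :
    F.StageExt S :=
  ⟨hS, fun ⟨_, hT, hST⟩ => hST.2 (hrange ▸ hT.range_subset_args)⟩

theorem stageExt_of_args_subset_insert_range {x : α} (hS : F.ConflictFree S)
    (hrange : F.args ⊆ insert x (F.range S))
    (hfull : ∀ T, F.ConflictFree T → ¬ F.args ⊆ F.range T) : F.StageExt S := by
  refine ⟨hS, fun ⟨T, hT, hST⟩ => hfull T hT fun y hy => ?_⟩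
  obtain ⟨z, hzT, hzS⟩ := Set.exists_of_ssubset hST
  rcases hrange (hT.range_subset_args hzT) with rfl | hz
  · rcases hrange hy with rfl | hy
    exacts [hzT, hST.1 hy]
  · exact absurd hz hzS

theorem StageExt.range_eq_args (hS : F.StageExt S) (hT : F.ConflictFree T)
    (hrange : F.range T = F.args) : F.range S = F.args := by
  refine hS.1.range_subset_args.antisymm fun y hy => ?_
  by_contra hyS
  exact hS.2 ⟨T, hT, (hrange ▸ hS.1.range_subset_args).ssubset_of_ne fun h =>
    hyS (h ▸ hrange ▸ hy)⟩

end ArgFramework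

open ArgFramework

/-- The arguments `c, d, e, f` of the example are encoded as `0, 1, 2, 3`. -/
def threeCycle : ArgFramework ℕ where
  args := {0, 1, 2}
  att := {(0, 1), (1, 2), (2, 0)}
  args_finite := Set.toFinite _
  att_sub := by simp [Set.insert_subset_iff]

def threeCycleWithAttacker : ArgFramework ℕ where
  args := {0, 1, 2, 3}
  att := {(0, 1), (1, 2), (2, 0), (3, 1)}
  args_finite := Set.toFinite _
  att_sub := by simp [Set.insert_subset_iff]

theorem threeCycle.not_args_subset_range {T : Set ℕ} (hT : threeCycle.ConflictFree T) :
    ¬ threeCycle.args ⊆ threeCycle.range T := by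
  intro hcover
  have h0 := hcover (by simp [threeCycle] : 0 ∈ threeCycle.args)
  have h1 := hcover (by simp [threeCycle] : 1 ∈ threeCycle.args)
  have h2 := hcover (by simp [threeCycle] : 2 ∈ threeCycle.args)
  simp [mem_range_iff, threeCycle] at h0 h1 h2
  have h01 : ¬ (0 ∈ T ∧ 1 ∈ T) := fun h => hT.2 0 h.1 1 h.2 (by simp [threeCycle])
  have h12 : ¬ (1 ∈ T ∧ 2 ∈ T) := fun h => hT.2 1 h.1 2 h.2 (by simp [threeCycle])
  have h20 : ¬ (2 ∈ T ∧ 0 ∈ T) := fun h => hT.2 2 h.1 0 h.2 (by simp [threeCycle])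
  tauto

theorem threeCycle.stageExt_zero : threeCycle.StageExt {0} := by
  refine stageExt_of_args_subset_insert_range (x := 2) (by simp [ConflictFree, threeCycle]) ?_
    fun _ => threeCycle.not_args_subset_range
  simp [Set.insert_subset_iff, mem_range_iff, threeCycle]

theorem threeCycleWithAttacker.conflictFree_two_three :
    threeCycleWithAttacker.ConflictFree {2, 3} := by
  simp [ConflictFree, Set.insert_subset_iff, threeCycleWithAttacker]

theorem threeCycleWithAttacker.range_two_three :
    threeCycleWithAttacker.range {2, 3} = threeCycleWithAttacker.args :=
  conflictFree_two_three.range_subset_args.antisymm <| by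
    simp [Set.insert_subset_iff, mem_range_iff, threeCycleWithAttacker]

theorem threeCycleWithAttacker.stageExt_two_three :
    threeCycleWithAttacker.StageExt {2, 3} :=
  stageExt_of_range_eq_args conflictFree_two_three range_two_three

theorem threeCycleWithAttacker.zero_not_mem_of_stageExt {E : Set ℕ}
    (hE : threeCycleWithAttacker.StageExt E) : 0 ∉ E := by
  intro h0
  have h2 : 2 ∈ threeCycleWithAttacker.range E :=
    hE.range_eq_args conflictFree_two_three range_two_three ▸ by simp [threeCycleWithAttacker]
  simp [mem_range_iff, threeCycleWithAttacker] at h2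
  rcases h2 with h2 | h1
  · exact hE.1.2 2 h2 0 h0 (by simp [threeCycleWithAttacker])
  · exact hE.1.2 0 h0 1 h1 (by simp [threeCycleWithAttacker])

theorem threeCycle_normalExpansion : threeCycle.NormalExpansion threeCycleWithAttacker := by
  refine ⟨?_, ?_, ?_⟩
  · simp [Set.insert_subset_iff, threeCycle, threeCycleWithAttacker]
  · simp [Set.insert_subset_iff, threeCycle, threeCycleWithAttacker]
  · simp only [threeCycle, threeCycleWithAttacker, Set.mem_insert_iff, Set.mem_singleton_iff,
      Prod.mk.injEq]
    omega

/-- For stage semantics, weak reference independence does not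
imply weak rational monotony: there are a framework and a normal expansion of
it for which the weak reference independence condition holds, yet some stage
extension of the original framework witnesses failure of the weak rational
monotony condition. -/
theorem weak_reference_independence_not_implies_weak_rational_monotony :
    ∃ F F' : ArgFramework ℕ,
      F.NormalExpansion F' ∧
      (∀ E, F.StageExt E →
        ∃ E', F'.StageExt E' ∧ (¬ E' ⊆ F.args ∨ E' = E)) ∧
      (∃ E, F.StageExt E ∧
        (¬ ∃ a b, (a, b) ∈ F'.att ∧
          a ∈ (⋃ T ∈ {T | F'.StageExt T}, T \ F.args) ∧ b ∈ E) ∧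
        ¬ ∃ E', F'.StageExt E' ∧ E ⊆ E') := by
  refine ⟨threeCycle, threeCycleWithAttacker, threeCycle_normalExpansion,
    fun _ _ => ⟨{2, 3}, threeCycleWithAttacker.stageExt_two_three, Or.inl ?_⟩,
    ⟨{0}, threeCycle.stageExt_zero, ?_, fun ⟨E', hE', h0⟩ =>
      threeCycleWithAttacker.zero_not_mem_of_stageExt hE' (h0 rfl)⟩⟩
  · simp [Set.insert_subset_iff, threeCycle]
  · rintro ⟨a, _, hatt, hU, rfl⟩
    have ha : a = 2 := by simpa [threeCycleWithAttacker] using hatt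
    simp [ha, threeCycle] at hU
end

section
/- There exist argumentation frameworks AF = (AR, Attacks) and AF' = (AR', Attacks') with AF ≼_N AF' such that, for stage semantics, the strong rational monotony condition holds but the strong reference independence condition fails; i.e., setting U = ⋃_{E' stage extension of AF'} (E' \ AR), for every stage extension E of AF, if there is no (a, b) ∈ Attacks' with a ∈ U and b ∈ E, then every stage extension E' of AF' satisfies E ⊆ E'; yet there exist a stage extension E of AF and a stage extension E' of AF' with E' ⊆ AR and E' ≠ E. A witness is AF = ({c, d}, {(c, d), (d, c)}) and AF' = ({c, d, e}, {(c, d), (d, c), (d, e), (e, d), (e, c)}), whose stage extensions are {{c}, {d}} and {{d}, {e}} respectively. -/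
/-!
With `c, d, e = 0, 1, 2`, the new argument `e` attacks both `c` and `d`, and `{e}` is a stage
extension of `AF'`, so `e` lies in `U` and attacks every nonempty subset of `{c, d}`. Stage
extensions of `AF` are nonempty (`{c}` has a nonempty range while `∅` has none), so strong
rational monotony holds vacuously. Strong reference independence fails because `{d} ⊆ AR` is
a stage extension of `AF'` different from the stage extension `{c}` of `AF`.
-/

namespace ArgFramework

variable {α : Type*} (F : ArgFramework α)

theorem conflictFree_singleton {a : α} (ha : a ∈ F.args) (haa : (a, a) ∉ F.att) :
    F.ConflictFree {a} :=
  ⟨Set.singleton_subset_iff.mpr ha, by rintro _ rfl _ rfl; exact haa⟩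

theorem range_subset_args {T : Set α} (hT : F.ConflictFree T) : F.range T ⊆ F.args := by
  rintro b (hb | ⟨a, -, hab⟩)
  · exact hT.1 hb
  · exact (F.att_sub hab).2

@[simp]
theorem range_empty : F.range ∅ = ∅ := by
  simp [range]

theorem stageExt_of_args_subset_range {S : Set α} (hS : F.ConflictFree S)
    (hfull : F.args ⊆ F.range S) : F.StageExt S := by
  refine ⟨hS, ?_⟩
  rintro ⟨T, hT, -, hnot⟩
  exact hnot (fun b hb => hfull (F.range_subset_args hT hb))

theorem StageExt.nonempty {E T : Set α} (hE : F.StageExt E) (hT : F.ConflictFree T)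
    (hrange : (F.range T).Nonempty) : E.Nonempty := by
  rw [Set.nonempty_iff_ne_empty]
  rintro rfl
  exact hE.2 ⟨T, hT, by simpa [Set.ssubset_iff_subset_ne, eq_comm, ← Set.nonempty_iff_ne_empty]⟩

end ArgFramework

open ArgFramework

def mutualAttackAF : ArgFramework ℕ where
  args := {0, 1}
  att := {(0, 1), (1, 0)}
  args_finite := Set.toFinite _
  att_sub := by rintro ⟨a, b⟩ (h | h) <;> simp_all

def mutualAttackExpandedAF : ArgFramework ℕ where
  args := {0, 1, 2}
  att := {(0, 1), (1, 0), (1, 2), (2, 1), (2, 0)}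
  args_finite := Set.toFinite _
  att_sub := by rintro ⟨a, b⟩ (h | h | h | h | h) <;> simp_all

theorem mutualAttackAF_normalExpansion :
    mutualAttackAF.NormalExpansion mutualAttackExpandedAF := by
  refine ⟨?_, ?_, ?_⟩
  · rintro a (rfl | rfl) <;> simp [mutualAttackExpandedAF]
  · rintro ⟨a, b⟩ (h | h) <;> simp_all [mutualAttackExpandedAF]
  · rintro a b hab hnew ⟨ha, hb⟩
    simp only [mutualAttackAF, mutualAttackExpandedAF, Set.mem_insert_iff,
      Set.mem_singleton_iff, Prod.mk.injEq] at hab hnew ha hb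
    omega

theorem mutualAttackAF_stageExt_zero : mutualAttackAF.StageExt {0} := by
  refine stageExt_of_args_subset_range _ (conflictFree_singleton _ ?_ ?_) ?_
  · simp [mutualAttackAF]
  · simp [mutualAttackAF]
  · rintro b (rfl | rfl)
    · exact Or.inl rfl
    · exact Or.inr ⟨0, rfl, by simp [mutualAttackAF]⟩

theorem mutualAttackExpandedAF_stageExt_one : mutualAttackExpandedAF.StageExt {1} := by
  refine stageExt_of_args_subset_range _ (conflictFree_singleton _ ?_ ?_) ?_
  · simp [mutualAttackExpandedAF]
  · simp [mutualAttackExpandedAF]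
  · rintro b (rfl | rfl | rfl)
    · exact Or.inr ⟨1, rfl, by simp [mutualAttackExpandedAF]⟩
    · exact Or.inl rfl
    · exact Or.inr ⟨1, rfl, by simp [mutualAttackExpandedAF]⟩

theorem mutualAttackExpandedAF_stageExt_two : mutualAttackExpandedAF.StageExt {2} := by
  refine stageExt_of_args_subset_range _ (conflictFree_singleton _ ?_ ?_) ?_
  · simp [mutualAttackExpandedAF]
  · simp [mutualAttackExpandedAF]
  · rintro b (rfl | rfl | rfl)
    · exact Or.inr ⟨2, rfl, by simp [mutualAttackExpandedAF]⟩
    · exact Or.inr ⟨2, rfl, by simp [mutualAttackExpandedAF]⟩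
    · exact Or.inl rfl

theorem mutualAttackAF_stageExt_nonempty {E : Set ℕ} (hE : mutualAttackAF.StageExt E) :
    E.Nonempty :=
  hE.nonempty _ mutualAttackAF_stageExt_zero.1 ⟨0, Or.inl rfl⟩

theorem two_mem_new_args_of_stageExt :
    2 ∈ ⋃ T ∈ {T | mutualAttackExpandedAF.StageExt T}, T \ mutualAttackAF.args :=
  Set.mem_biUnion (x := {2}) mutualAttackExpandedAF_stageExt_two
    ⟨rfl, by simp [mutualAttackAF]⟩

theorem two_attacks_of_mem_args {b : ℕ} (hb : b ∈ mutualAttackAF.args) :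
    (2, b) ∈ mutualAttackExpandedAF.att := by
  rcases hb with rfl | rfl <;> simp [mutualAttackExpandedAF]

/-- For stage semantics, strong rational monotony does not imply
strong reference independence: there are a framework and a normal expansion
of it for which the strong rational monotony condition holds but the strong
reference independence condition fails. -/
theorem strong_rational_monotony_not_implies_strong_reference_independence :
    ∃ F F' : ArgFramework ℕ,
      F.NormalExpansion F' ∧
      (∀ E, F.StageExt E →
        (¬ ∃ a b, (a, b) ∈ F'.att ∧
          a ∈ (⋃ T ∈ {T | F'.StageExt T}, T \ F.args) ∧ b ∈ E) →
        ∀ E', F'.StageExt E' → E ⊆ E') ∧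
      (∃ E E', F.StageExt E ∧ F'.StageExt E' ∧ E' ⊆ F.args ∧ E' ≠ E) := by
  refine ⟨mutualAttackAF, mutualAttackExpandedAF, mutualAttackAF_normalExpansion, ?_,
    {0}, {1}, mutualAttackAF_stageExt_zero, mutualAttackExpandedAF_stageExt_one, ?_, ?_⟩
  · intro E hE hunattacked
    obtain ⟨b, hb⟩ := mutualAttackAF_stageExt_nonempty hE
    exact (hunattacked ⟨2, b, two_attacks_of_mem_args (hE.1.1 hb),
      two_mem_new_args_of_stageExt, hb⟩).elim
  · simp [mutualAttackAF]
  · simp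
end

section
/- Naive semantics satisfies weak reference independence: for every two argumentation frameworks AF = (AR, Attacks) and AF' = (AR', Attacks') with AF ≼_N AF', and for every naive extension E of AF, there exists a naive extension E' of AF' such that E' ⊄ AR or E' = E. -/
/-! Extend `E`, which stays conflict-free in `F'` since no new attack lies inside `F.args`, to a
maximal conflict-free set `E'` of `F'`. If `E' ⊆ F.args`, then `E'` is conflict-free in `F` as
well, so maximality of `E` forces `E' = E`. -/

namespace ArgFramework

variable {α : Type*}

theorem NormalExpansion.conflictFree {F F' : ArgFramework α} (hN : F.NormalExpansion F')
    {S : Set α} (hS : F.ConflictFree S) : F'.ConflictFree S := by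
  obtain ⟨hargs, -, hnew⟩ := hN
  refine ⟨hS.1.trans hargs, fun a ha b hb hab => ?_⟩
  by_cases hold : (a, b) ∈ F.att
  · exact hS.2 a ha b hb hold
  · exact hnew a b hab hold ⟨hS.1 ha, hS.1 hb⟩

theorem ConflictFree.of_att_subset_s9 {F F' : ArgFramework α} (hatt : F.att ⊆ F'.att)
    {S : Set α} (hS : F'.ConflictFree S) (hSF : S ⊆ F.args) : F.ConflictFree S :=
  ⟨hSF, fun a ha b hb hab => hS.2 a ha b hb (hatt hab)⟩

theorem ConflictFree.exists_naiveExt_superset {F : ArgFramework α} {S : Set α}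
    (hS : F.ConflictFree S) : ∃ E, F.NaiveExt E ∧ S ⊆ E := by
  have hfin : {T | F.ConflictFree T}.Finite :=
    F.args_finite.finite_subsets.subset fun _ hT => hT.1
  obtain ⟨E, hSE, hmax⟩ := hfin.exists_le_maximal (a := S) hS
  exact ⟨E, ⟨hmax.1, fun T hT hET => hET.antisymm (hmax.2 hT hET)⟩, hSE⟩

end ArgFramework

/-- Naive semantics satisfies weak reference independence: for
every framework, every normal expansion of it, and every naive extension `E`
of the original framework, there is a naive extension `E'` of the expansion
with `E' ⊄ AR` or `E' = E`. -/
theorem naive_weak_reference_independence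
    {α : Type*} (F F' : ArgFramework α)
    (hN : F.NormalExpansion F') :
    ∀ E, F.NaiveExt E → ∃ E', F'.NaiveExt E' ∧ (¬ E' ⊆ F.args ∨ E' = E) := by
  intro E hE
  obtain ⟨E', hE', hEE'⟩ := (hN.conflictFree hE.1).exists_naiveExt_superset
  refine ⟨E', hE', ?_⟩
  by_cases hE'F : E' ⊆ F.args
  · exact Or.inr (hE.2 E' (hE'.1.of_att_subset_s9 hN.2.1 hE'F) hEE').symm
  · exact Or.inl hE'F
end

section
/- Grounded semantics violates weak reference independence: there exist argumentation frameworks AF = (AR, Attacks) and AF' = (AR', Attacks') with AF ≼_N AF' and a grounded extension E of AF such that every grounded extension E' of AF' satisfies E' ⊆ AR and E' ≠ E. A witness is AF = ({a, b}, {(a, b)}) and AF' = ({a, b, c}, {(a, b), (b, c), (c, a)}), whose grounded extensions are {a} and ∅ respectively. -/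
/-!
An argument that nobody attacks is acceptable with respect to every set, so it lies in every
complete extension; in the pair `0 → 1` this makes `{0}` grounded. In the cycle
`0 → 1 → 2 → 0` every argument is attacked, so nothing is acceptable with respect to `∅`,
which is therefore complete and hence the only candidate for the grounded extension.
-/

namespace ArgFramework

variable {α : Type*} {F : ArgFramework α} {S : Set α} {a : α}

theorem acceptable_empty_iff : F.Acceptable ∅ a ↔ ∀ b, (b, a) ∉ F.att := by
  simp [Acceptable]

theorem completeExt_empty_iff : F.CompleteExt ∅ ↔ ∀ a ∈ F.args, ∃ b, (b, a) ∈ F.att := by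
  simp [CompleteExt, Admissible, ConflictFree, acceptable_empty_iff]

theorem CompleteExt.mem_of_unattacked (hS : F.CompleteExt S) (ha : a ∈ F.args)
    (h : ∀ b, (b, a) ∉ F.att) : a ∈ S :=
  hS.2 a ha fun b hb => absurd hb (h b)

theorem GroundedExt.eq_empty (hS : F.GroundedExt S) (h : F.CompleteExt ∅) : S = ∅ :=
  Set.subset_empty_iff.mp (hS.2 ∅ h)

end ArgFramework

open ArgFramework

def attackPair : ArgFramework ℕ where
  args := {0, 1}
  att := {(0, 1)}
  args_finite := Set.toFinite _
  att_sub := by simp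

def attackTriangle : ArgFramework ℕ where
  args := {0, 1, 2}
  att := {(0, 1), (1, 2), (2, 0)}
  args_finite := Set.toFinite _
  att_sub := by simp [Set.insert_subset_iff]

theorem attackPair_normalExpansion : attackPair.NormalExpansion attackTriangle := by
  refine ⟨by simp [attackPair, attackTriangle, Set.insert_subset_iff],
    by simp [attackPair, attackTriangle], ?_⟩
  simp only [attackPair, attackTriangle, Set.mem_insert_iff, Set.mem_singleton_iff,
    Prod.mk.injEq]
  omega

theorem groundedExt_attackPair : attackPair.GroundedExt {0} := by
  have unattacked : ∀ b, (b, 0) ∉ attackPair.att := by simp [attackPair]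
  have admissible : attackPair.Admissible {0} :=
    ⟨⟨by simp [attackPair], by simp [attackPair]⟩,
      fun a ha b hb => absurd hb (ha ▸ unattacked b)⟩
  have undefended : ¬attackPair.Acceptable {0} 1 := fun h => by simpa [attackPair] using h 0
  refine ⟨⟨admissible, fun a ha hacc => ?_⟩, fun T hT => Set.singleton_subset_iff.mpr
    (hT.mem_of_unattacked (by simp [attackPair]) unattacked)⟩
  obtain rfl | rfl : a = 0 ∨ a = 1 := ha
  · rfl
  · exact absurd hacc undefended

theorem completeExt_empty_attackTriangle : attackTriangle.CompleteExt ∅ := by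
  refine completeExt_empty_iff.mpr fun a ha => ?_
  simp only [attackTriangle, Set.mem_insert_iff, Set.mem_singleton_iff] at ha ⊢
  rcases ha with rfl | rfl | rfl
  exacts [⟨2, by simp⟩, ⟨0, by simp⟩, ⟨1, by simp⟩]

/-- Grounded semantics violates weak reference independence:
there are a framework, a normal expansion of it, and a grounded extension `E`
of the original framework such that every grounded extension `E'` of the
expansion satisfies `E' ⊆ AR` and `E' ≠ E`. -/
theorem grounded_violates_weak_reference_independence :
    ∃ F F' : ArgFramework ℕ,
      F.NormalExpansion F' ∧
      ∃ E, F.GroundedExt E ∧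
        ∀ E', F'.GroundedExt E' → E' ⊆ F.args ∧ E' ≠ E := by
  refine ⟨attackPair, attackTriangle, attackPair_normalExpansion, {0}, groundedExt_attackPair,
    fun E' hE' => ?_⟩
  obtain rfl := hE'.eq_empty completeExt_empty_attackTriangle
  exact ⟨Set.empty_subset _, (Set.singleton_nonempty 0).ne_empty.symm⟩
end

section
/- Preferred semantics violates weak reference independence: there exist argumentation frameworks AF = (AR, Attacks) and AF' = (AR', Attacks') with AF ≼_N AF' and a preferred extension E of AF such that every preferred extension E' of AF' satisfies E' ⊆ AR and E' ≠ E. A witness is AF = ({a, b}, {(a, b)}) and AF' = ({a, b, c}, {(a, b), (b, c), (c, a)}), whose preferred extensions are {{a}} and {∅} respectively. -/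
/-! The single attack has the stable, hence preferred, extension `{0}`. In the three-cycle every
argument has exactly one attacker, so an admissible set containing an argument must also
contain the argument it attacks; thus the only admissible, and so the only preferred,
extension of the expansion is `∅`. -/

namespace ArgFramework

section

variable {α : Type*} {F : ArgFramework α} {S : Set α}

theorem StableExt.admissible (hS : F.StableExt S) : F.Admissible S := by
  exact ⟨hS.1, fun a ha b hba => hS.2 b ⟨(F.att_sub hba).1, fun hb => hS.1.2 b hb a ha hba⟩⟩

theorem StableExt.preferredExt (hS : F.StableExt S) : F.PreferredExt S := by
  refine ⟨hS.admissible, fun T hT hST => hST.antisymm fun x hx => ?_⟩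
  by_contra hxS
  obtain ⟨a, ha, hax⟩ := hS.2 x ⟨hT.1.1 hx, hxS⟩
  exact hT.1.2 a (hST ha) x hx hax

theorem Admissible.mem_of_attackers_eq (hS : F.Admissible S) {a b c : α} (ha : a ∈ S)
    (hb : ∀ x, (x, a) ∈ F.att ↔ x = b) (hc : ∀ x, (x, b) ∈ F.att ↔ x = c) : c ∈ S := by
  obtain ⟨d, hd, hdb⟩ := hS.2 a ha b ((hb b).2 rfl)
  exact (hc d).1 hdb ▸ hd

end

def singleAttack : ArgFramework ℕ where
  args := {0, 1}
  att := {(0, 1)}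
  args_finite := Set.toFinite _
  att_sub := by simp

def threeCycle : ArgFramework ℕ where
  args := {0, 1, 2}
  att := {(0, 1), (1, 2), (2, 0)}
  args_finite := Set.toFinite _
  att_sub := by simp [Set.insert_subset_iff]

theorem singleAttack_normalExpansion_threeCycle : singleAttack.NormalExpansion threeCycle := by
  refine ⟨by simp [singleAttack, threeCycle, Set.insert_subset_iff],
    by simp [singleAttack, threeCycle], ?_⟩
  simp only [singleAttack, threeCycle]
  rintro a b hab hnew ⟨ha, hb⟩
  simp only [Set.mem_insert_iff, Set.mem_singleton_iff, Prod.mk.injEq] at hab hnew ha hb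
  omega

theorem singleAttack_stableExt : singleAttack.StableExt {0} := by
  simp [StableExt, ConflictFree, singleAttack]

theorem threeCycle_admissible_eq_empty {S : Set ℕ} (hS : threeCycle.Admissible S) : S = ∅ := by
  refine Set.eq_empty_of_forall_notMem fun a ha => ?_
  have hcycle : ∃ b c, (a, c) ∈ threeCycle.att ∧ (∀ x, (x, a) ∈ threeCycle.att ↔ x = b) ∧
      ∀ x, (x, b) ∈ threeCycle.att ↔ x = c := by
    rcases hS.1.1 ha with rfl | rfl | rfl
    · exact ⟨2, 1, by simp [threeCycle]⟩
    · exact ⟨0, 2, by simp [threeCycle]⟩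
    · exact ⟨1, 0, by simp [threeCycle]⟩
  obtain ⟨b, c, hac, hb, hc⟩ := hcycle
  exact hS.1.2 a ha c (hS.mem_of_attackers_eq ha hb hc) hac

end ArgFramework

/-- Preferred semantics violates weak reference independence:
there are a framework, a normal expansion of it, and a preferred extension
`E` of the original framework such that every preferred extension `E'` of the
expansion satisfies `E' ⊆ AR` and `E' ≠ E`. -/
theorem preferred_violates_weak_reference_independence :
    ∃ F F' : ArgFramework ℕ,
      F.NormalExpansion F' ∧
      ∃ E, F.PreferredExt E ∧
        ∀ E', F'.PreferredExt E' → E' ⊆ F.args ∧ E' ≠ E := by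
  refine ⟨ArgFramework.singleAttack, ArgFramework.threeCycle,
    ArgFramework.singleAttack_normalExpansion_threeCycle, {0},
    ArgFramework.singleAttack_stableExt.preferredExt, fun E' hE' => ?_⟩
  obtain rfl := ArgFramework.threeCycle_admissible_eq_empty hE'.1
  exact ⟨Set.empty_subset _, (Set.singleton_ne_empty 0).symm⟩
end

section
/- Rational man's expansions preserve weak reference independence for grounded semantics: for every two argumentation frameworks AF = (AR, Attacks) and AF' = (AR', Attacks') such that AF' is a rational man's expansion of AF (AF ≼_RM AF'), and for every grounded extension E of AF, there exists a grounded extension E' of AF' such that E' ⊄ AR or E' = E. -/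
/-!
The grounded extension is the least fixed point of Dung's characteristic function `S ↦ {a | S
defends a}`. Let `G'` be the grounded extension of the expansion and suppose `G' ⊆ AR`. Every
new argument `b` is then attacked by `G'`: otherwise `b` lies in the set of arguments neither in
`G'` nor attacked by it, and every member of that set is attacked by another member (it is not
acceptable w.r.t. `G'`). In a finite framework, following such attacks backwards from `b` closes
an attack cycle, whose arguments are old by non-cyclicity, and which reaches `b`: exactly what a
rational man's expansion forbids. With all new arguments defeated by `G' ⊆ AR`, and no new
attacks among old arguments, `G'` is complete in `AF`, so `E ⊆ G'`; and anything `E` defends in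
`AF'` is defended by `G'`, hence old, hence in `E`, so `G' ⊆ E`.
-/

namespace ArgFramework

variable {α : Type*} {F F' : ArgFramework α} {S T : Set α} {a b : α}

theorem Acceptable.mono (h : F.Acceptable S a) (hST : S ⊆ T) : F.Acceptable T a := fun b hb =>
  let ⟨c, hc, hcb⟩ := h b hb
  ⟨c, hST hc, hcb⟩

variable (F) in
/-- Dung's characteristic function. -/
def characteristic : Set α →o Set α where
  toFun S := {a | a ∈ F.args ∧ F.Acceptable S a}
  monotone' _ _ hST _ ha := ⟨ha.1, ha.2.mono hST⟩

theorem CompleteExt.characteristic_subset (h : F.CompleteExt S) : F.characteristic S ⊆ S :=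
  fun a ha => h.2 a ha.1 ha.2

variable (F) in
def grounded : Set α := OrderHom.lfp F.characteristic

theorem characteristic_grounded : F.characteristic F.grounded = F.grounded :=
  OrderHom.map_lfp _

theorem conflictFree_grounded : F.ConflictFree F.grounded := by
  set G := F.grounded
  have hfix : F.characteristic G = G := characteristic_grounded
  -- every attacker inside `G` of a member of `G` is itself attacked from inside `G`
  set X := {a | a ∈ G ∧ ∃ b ∈ G, (a, b) ∈ F.att}
  have hGX : G ⊆ G \ X := by
    refine OrderHom.lfp_le _ fun a ⟨ha, hacc⟩ => ⟨?_, ?_⟩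
    · rw [← hfix]
      exact ⟨ha, hacc.mono Set.sdiff_subset⟩
    · rintro ⟨haG, b, hbG, hab⟩
      rw [← hfix] at hbG haG
      obtain ⟨c, hcG, hca⟩ := hbG.2 a hab
      obtain ⟨d, ⟨hdG, hdX⟩, hdc⟩ := hacc c hca
      exact hdX ⟨hdG, c, hcG, hdc⟩
  refine ⟨fun a ha => (hfix ▸ ha).1, fun a ha b hb hab => ?_⟩
  exact (hGX ha).2 ⟨ha, b, hb, hab⟩

theorem groundedExt_grounded : F.GroundedExt F.grounded := by
  refine ⟨⟨⟨conflictFree_grounded, fun a ha => ?_⟩, fun a ha hacc => ?_⟩,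
    fun T hT => OrderHom.lfp_le _ hT.characteristic_subset⟩
  · rw [← characteristic_grounded] at ha
    exact ha.2
  · rw [← characteristic_grounded]
    exact ⟨ha, hacc⟩

theorem AttackSeq.cons {l : List α} (hl : F.AttackSeq l) (ha : l.head? = some a)
    (hb : b ∈ F.args) (hbl : b ∉ l) (hba : (b, a) ∈ F.att) : F.AttackSeq (b :: l) := by
  refine ⟨List.cons_ne_nil b l, List.nodup_cons.2 ⟨hbl, hl.2.1⟩, ?_, ?_⟩
  · exact List.forall_mem_cons.2 ⟨hb, hl.2.2.1⟩
  · exact List.isChain_cons.2 ⟨by simpa [ha] using hba, hl.2.2.2⟩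

theorem AttackSeq.length_le {l : List α} (hl : F.AttackSeq l) : l.length ≤ F.args.ncard := by
  classical
  rw [← List.toFinset_card_of_nodup hl.2.1, ← Set.ncard_coe_finset]
  exact Set.ncard_le_ncard (fun x hx => hl.2.2.1 x (List.mem_toFinset.1 hx)) F.args_finite

theorem AttackSeq.exists_attackCycle {l : List α} (hl : F.AttackSeq l) (ha : l.head? = some a)
    (hb : b ∈ l) (hba : (b, a) ∈ F.att) : ∃ c, F.AttackCycle c ∧ a ∈ c := by
  obtain ⟨p, s, rfl⟩ := List.append_of_mem hb
  obtain ⟨-, hnodup, hargs, hchain⟩ := hl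
  rw [← List.singleton_append, ← List.append_assoc] at ha hnodup hargs hchain
  have hpb : (p ++ [b]).head? = some a := by simpa using ha
  have haF : a ∈ F.args := hargs a (List.mem_of_mem_head? ha)
  refine ⟨p ++ [b] ++ [a], ⟨by simp, ?_, ?_, ?_, ?_⟩, by simp⟩
  · intro x hx
    rcases List.mem_append.1 hx with hx | hx
    · exact hargs x (List.mem_append_left s hx)
    · rwa [List.mem_singleton.1 hx]
  · exact List.isChain_append.2 ⟨hchain.left_of_append, List.isChain_singleton a, by simpa⟩
  · rw [List.head?_append, hpb, List.getLast?_concat]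
    rfl
  · rw [List.dropLast_concat]
    exact hnodup.sublist (List.sublist_append_left _ _)

theorem exists_reachable_attackCycle_of_forall_attacked {U : Set α} (hU : U ⊆ F.args)
    (hback : ∀ x ∈ U, ∃ y ∈ U, (y, x) ∈ F.att) (hb : b ∈ U) :
    ∃ a, F.Reachable a b ∧ ∃ c, F.AttackCycle c ∧ a ∈ c := by
  classical
  by_contra! hno
  set L := {l | F.AttackSeq l ∧ (∀ x ∈ l, x ∈ U) ∧ l.getLast? = some b}
  have hextend : ∀ l ∈ L, ∃ l' ∈ L, l.length < l'.length := by
    rintro l ⟨hl, hlU, hlb⟩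
    obtain ⟨a, ha⟩ := Option.ne_none_iff_exists'.1 (mt List.head?_eq_none_iff.1 hl.1)
    obtain ⟨y, hyU, hya⟩ := hback a (hlU a (List.mem_of_mem_head? ha))
    by_cases hyl : y ∈ l
    · obtain ⟨c, hc, hac⟩ := hl.exists_attackCycle ha hyl hya
      exact absurd hac (hno a ⟨l, hl, ha, hlb⟩ c hc)
    · refine ⟨y :: l, ⟨hl.cons ha (hU hyU) hyl hya, ?_, ?_⟩, by simp⟩
      · exact List.forall_mem_cons.2 ⟨hyU, hlU⟩
      · rw [List.getLast?_cons, hlb]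
        rfl
  have hlong : ∀ n, ∃ l ∈ L, n ≤ l.length := by
    intro n
    induction n with
    | zero =>
      refine ⟨[b], ⟨⟨List.cons_ne_nil b [], List.nodup_singleton b, ?_,
        List.isChain_singleton b⟩, ?_, rfl⟩, Nat.zero_le _⟩
      · simpa using hU hb
      · simpa using hb
    | succ n ih =>
      obtain ⟨l, hl, hn⟩ := ih
      obtain ⟨l', hl', hlt⟩ := hextend l hl
      exact ⟨l', hl', by omega⟩
  obtain ⟨l, hl, hlen⟩ := hlong (F.args.ncard + 1)
  have := hl.1.length_le
  omega

theorem RationalManExpansion.exists_attacker_of_completeExt (hRM : F.RationalManExpansion F')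
    (hS : F'.CompleteExt S) (hSF : S ⊆ F.args) (hb : b ∈ F'.args \ F.args) :
    ∃ c ∈ S, (c, b) ∈ F'.att := by
  by_contra! hb'
  set U := {x | x ∈ F'.args ∧ x ∉ S ∧ ∀ c ∈ S, (c, x) ∉ F'.att}
  have hback : ∀ x ∈ U, ∃ y ∈ U, (y, x) ∈ F'.att := by
    rintro x ⟨hx, hxS, hxatt⟩
    have hnacc : ¬ F'.Acceptable S x := fun hacc => hxS (hS.2 x hx hacc)
    simp only [Acceptable, not_forall, not_exists, not_and] at hnacc
    obtain ⟨y, hyx, hy⟩ := hnacc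
    exact ⟨y, ⟨(F'.att_sub hyx).1, fun hyS => hxatt y hyS hyx, hy⟩, hyx⟩
  obtain ⟨a, hab, c, hc, hac⟩ := exists_reachable_attackCycle_of_forall_attacked
    (fun x hx => hx.1) hback ⟨hb.1, fun h => hb.2 (hSF h), hb'⟩
  obtain ⟨-, ⟨-, -, hcycles⟩, hreach⟩ := hRM
  exact hreach a (((hcycles c).1 hc).2.1 a hac) b hb hab c hc hac

theorem NormalExpansion.mem_att_iff (hN : F.NormalExpansion F') (ha : a ∈ F.args)
    (hb : b ∈ F.args) : (a, b) ∈ F'.att ↔ (a, b) ∈ F.att :=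
  ⟨fun h => by_contra fun h' => hN.2.2 a b h h' ⟨ha, hb⟩, fun h => hN.2.1 h⟩

theorem NormalExpansion.acceptable_of_acceptable_expansion (hN : F.NormalExpansion F')
    (hSF : S ⊆ F.args) (h : F'.Acceptable S a) : F.Acceptable S a := fun b hba =>
  let ⟨c, hc, hcb⟩ := h b (hN.2.1 hba)
  ⟨c, hc, (hN.mem_att_iff (hSF hc) (F.att_sub hba).1).1 hcb⟩

theorem NormalExpansion.acceptable_expansion_of_acceptable (hN : F.NormalExpansion F')
    (ha : a ∈ F.args) (hnew : ∀ b ∈ F'.args \ F.args, ∃ c ∈ S, (c, b) ∈ F'.att)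
    (h : F.Acceptable S a) : F'.Acceptable S a := by
  intro b hba
  by_cases hb : b ∈ F.args
  · obtain ⟨c, hc, hcb⟩ := h b ((hN.mem_att_iff hb ha).1 hba)
    exact ⟨c, hc, hN.2.1 hcb⟩
  · exact hnew b ⟨(F'.att_sub hba).1, hb⟩

theorem NormalExpansion.completeExt_of_completeExt (hN : F.NormalExpansion F')
    (hS : F'.CompleteExt S) (hSF : S ⊆ F.args)
    (hnew : ∀ b ∈ F'.args \ F.args, ∃ c ∈ S, (c, b) ∈ F'.att) : F.CompleteExt S := by
  obtain ⟨⟨⟨-, hcf⟩, hdef⟩, hcomp⟩ := hS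
  refine ⟨⟨⟨hSF, fun a ha b hb hab => hcf a ha b hb (hN.2.1 hab)⟩, fun a ha => ?_⟩, ?_⟩
  · exact hN.acceptable_of_acceptable_expansion hSF (hdef a ha)
  · exact fun a ha hacc =>
      hcomp a (hN.1 ha) (hN.acceptable_expansion_of_acceptable ha hnew hacc)

theorem NormalExpansion.characteristic_subset (hN : F.NormalExpansion F') (hE : F.CompleteExt S)
    (hT : F'.CompleteExt T) (hST : S ⊆ T) (hTF : T ⊆ F.args) : F'.characteristic S ⊆ S := by
  rintro a ⟨ha, hacc⟩
  have haF : a ∈ F.args := hTF (hT.2 a ha (hacc.mono hST))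
  exact hE.2 a haF (hN.acceptable_of_acceptable_expansion hE.1.1.1 hacc)

end ArgFramework

/-- Rational man's expansions preserve weak reference
independence for grounded semantics: for every rational man's expansion and
every grounded extension `E` of the original framework, there is a grounded
extension `E'` of the expansion with `E' ⊄ AR` or `E' = E`. -/
theorem rational_man_expansion_grounded_weak_reference_independence
    {α : Type*} (F F' : ArgFramework α)
    (hRM : F.RationalManExpansion F') :
    ∀ E, F.GroundedExt E →
      ∃ E', F'.GroundedExt E' ∧ (¬ E' ⊆ F.args ∨ E' = E) := by
  intro E hE
  refine ⟨F'.grounded, ArgFramework.groundedExt_grounded, (em' _).imp_right fun hG => ?_⟩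
  have hG' := (ArgFramework.groundedExt_grounded (F := F')).1
  have hnew : ∀ b ∈ F'.args \ F.args, ∃ c ∈ F'.grounded, (c, b) ∈ F'.att :=
    fun _ => hRM.exists_attacker_of_completeExt hG' hG
  have hEG : E ⊆ F'.grounded := hE.2 _ (hRM.1.completeExt_of_completeExt hG' hG hnew)
  exact (OrderHom.lfp_le _ (hRM.1.characteristic_subset hE.1 hG' hEG hG)).antisymm hEG
end

section
/- Rational man's expansions preserve weak reference independence for preferred semantics: for every two argumentation frameworks AF = (AR, Attacks) and AF' = (AR', Attacks') such that AF' is a rational man's expansion of AF (AF ≼_RM AF'), and for every preferred extension E of AF, there exists a preferred extension E' of AF' such that E' ⊄ AR or E' = E. -/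
/-!
Let `A` be the set of arguments of `AF'` from which a new argument is reachable. It is closed
under attackers, and by the rational man's condition no attack cycle of `AF'` meets it, so the
attacks into `A` are well-founded and `A` carries a grounded labelling `G`: `x ∈ G` iff `x ∈ A`
and no attacker of `x` lies in `G`. `G` is admissible in `AF'`. If `G` contains a new argument,
every preferred extension containing `G` leaves `AR`. Otherwise `E ∪ G` is admissible in `AF'`:
`G` attacks every new attacker of `E`, and well-founded induction shows that `E`, which defends
itself against `G`, does not attack `G`. A preferred extension `E' ⊇ E ∪ G` of `AF'` inside `AR`
is then admissible in `AF`, hence equal to `E`.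
-/

namespace List

variable {α : Type*} {r : α → α → Prop}

theorem IsChain.exists_cycle_infix {l : List α} (hl : l.IsChain r) (hlen : 2 ≤ l.length)
    (hclosed : l.head? = l.getLast?) :
    ∃ c, c <:+: l ∧ c.IsChain r ∧ 2 ≤ c.length ∧ c.head? = c.getLast? ∧
      c.dropLast.Nodup := by
  induction hn : l.length using Nat.strong_induction_on generalizing l with
  | _ n ih =>
  by_cases hnd : l.dropLast.Nodup
  · exact ⟨l, infix_refl l, hl, hlen, hclosed, hnd⟩
  obtain ⟨x, hx⟩ : ∃ x, [x, x] <+ l.dropLast := by simpa [nodup_iff_sublist] using hnd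
  obtain ⟨r₁, r₂, hsplit, hx₁, hx₂⟩ := cons_sublist_iff.1 hx
  obtain ⟨s, t, rfl⟩ := append_of_mem hx₁
  obtain ⟨u, v, rfl⟩ := append_of_mem (singleton_sublist.1 hx₂)
  have hw : x :: (t ++ u) ++ [x] <:+: l :=
    IsInfix.trans ⟨s, v, by simp [hsplit]⟩ (dropLast_prefix l).isInfix
  have hlt : (x :: (t ++ u) ++ [x]).length < n := by
    have := congrArg length hsplit
    simp only [length_dropLast, length_append, length_cons, length_nil] at this ⊢
    omega
  obtain ⟨c, hc, hcycle⟩ :=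
    ih _ (hn ▸ hlt) (hl.infix hw) (by simp; omega) (by rw [getLast?_append]; simp) rfl
  exact ⟨c, hc.trans hw, hcycle⟩

end List

namespace ArgFramework

variable {α : Type*}

section Reachable

variable {F : ArgFramework α} {a b x y : α}

theorem Reachable.refl (ha : a ∈ F.args) : F.Reachable a a :=
  ⟨[a], ⟨List.cons_ne_nil _ _, List.nodup_singleton a, by simpa, List.isChain_singleton a⟩,
    rfl, rfl⟩

theorem Reachable.mem_args (h : F.Reachable a b) : a ∈ F.args := by
  obtain ⟨l, ⟨-, -, hargs, -⟩, hhead, -⟩ := h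
  exact hargs a (List.mem_of_mem_head? hhead)

theorem Reachable.head (hyx : (y, x) ∈ F.att) (h : F.Reachable x b) : F.Reachable y b := by
  obtain ⟨l, ⟨-, hnd, hargs, hchain⟩, hhead, hlast⟩ := h
  obtain ⟨t, rfl⟩ := List.head?_eq_some_iff.1 hhead
  by_cases hy : y ∈ x :: t
  · obtain ⟨s, u, hsu⟩ := List.append_of_mem hy
    rw [hsu] at hnd hargs hchain hlast
    refine ⟨y :: u, ⟨List.cons_ne_nil _ _, hnd.sublist (List.sublist_append_right s _),
      fun c hc => hargs c (List.mem_append_right s hc), hchain.suffix ⟨s, rfl⟩⟩, rfl, ?_⟩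
    rwa [List.getLast?_append_of_ne_nil _ (List.cons_ne_nil _ _)] at hlast
  · refine ⟨y :: x :: t, ⟨List.cons_ne_nil _ _, List.nodup_cons.2 ⟨hy, hnd⟩, ?_,
      hchain.cons_cons hyx⟩, rfl, by rwa [List.getLast?_cons_cons]⟩
    exact List.forall_mem_cons.2 ⟨(F.att_sub hyx).1, hargs⟩

end Reachable

def attInto (F : ArgFramework α) (A : Set α) (y x : α) : Prop :=
  (y, x) ∈ F.att ∧ x ∈ A

section Acyclic

variable {F : ArgFramework α} {A : Set α}

theorem exists_attackCycle_of_transGen {x : α} (h : Relation.TransGen (F.attInto A) x x) :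
    ∃ l, F.AttackCycle l ∧ ∀ a ∈ l, a ∈ A := by
  obtain ⟨b, hxb, hbx⟩ := Relation.TransGen.head'_iff.1 h
  obtain ⟨l, hchain, hlast⟩ := List.exists_isChain_cons_of_relationReflTransGen hbx
  have hmem : ∀ a ∈ b :: l, a ∈ A ∧ a ∈ F.args :=
    hchain.induction _ _ (fun _ _ hyz _ => ⟨hyz.2, (F.att_sub hyz.1).2⟩)
      fun _ => ⟨hxb.2, (F.att_sub hxb.1).2⟩
  have hx : x ∈ b :: l := hlast ▸ List.getLast_mem _
  have hwalk : (x :: b :: l).getLast? = some x := by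
    rw [List.getLast?_cons_cons, List.getLast?_eq_some_getLast (List.cons_ne_nil _ _), hlast]
  obtain ⟨c, hc, hchain', hlen, hclosed, hnd⟩ :=
    (hchain.cons_cons hxb).exists_cycle_infix (by simp) hwalk.symm
  have hcmem : ∀ a ∈ c, a ∈ A ∧ a ∈ F.args := fun a ha =>
    hmem a (List.forall_mem_cons.2 ⟨hx, fun _ => id⟩ a (hc.subset ha))
  exact ⟨c, ⟨hlen, fun a ha => (hcmem a ha).2, hchain'.imp fun _ _ h => h.1, hclosed, hnd⟩,
    fun a ha => (hcmem a ha).1⟩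

theorem wellFounded_attInto (h : ∀ l, F.AttackCycle l → ∀ a ∈ l, a ∉ A) :
    WellFounded (F.attInto A) := by
  have : IsStrictOrder α (Relation.TransGen (F.attInto A)) :=
    { irrefl := fun x hx => by
        obtain ⟨l, hl, hlA⟩ := exists_attackCycle_of_transGen hx
        obtain ⟨a, ha⟩ := List.exists_mem_of_length_pos (l := l) (by have := hl.1; omega)
        exact h l hl a ha (hlA a ha) }
  exact Subrelation.wf (fun hyx => ⟨.single hyx, F.att_sub hyx.1⟩)
    (Set.wellFoundedOn_iff.1 (F.args_finite.wellFoundedOn (r := Relation.TransGen _)))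

end Acyclic

section Grounded

variable (F : ArgFramework α) (A : Set α) (wf : WellFounded (F.attInto A))

def groundedOn : Set α :=
  {x | wf.fix (fun x IH => x ∈ A ∧ ∀ y, ∀ h : F.attInto A y x, ¬ IH y h) x}

variable {F A wf} {x y : α}

theorem mem_groundedOn_iff :
    x ∈ F.groundedOn A wf ↔
      x ∈ A ∧ ∀ y, (y, x) ∈ F.att → y ∉ F.groundedOn A wf := by
  conv_lhs => rw [groundedOn, Set.mem_ofPred_eq, wf.fix_eq]
  exact and_congr_right fun hx => ⟨fun h y hy => h y ⟨hy, hx⟩, fun h y hy => h y hy.1⟩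

theorem groundedOn_subset : F.groundedOn A wf ⊆ A :=
  fun _ hx => (mem_groundedOn_iff.1 hx).1

theorem notMem_groundedOn_of_att (hx : x ∈ F.groundedOn A wf) (hyx : (y, x) ∈ F.att) :
    y ∉ F.groundedOn A wf :=
  (mem_groundedOn_iff.1 hx).2 y hyx

theorem exists_att_of_notMem_groundedOn (hx : x ∈ A) (hxG : x ∉ F.groundedOn A wf) :
    ∃ y ∈ F.groundedOn A wf, (y, x) ∈ F.att := by
  by_contra! h
  exact hxG (mem_groundedOn_iff.2 ⟨hx, fun y hyx hy => h y hy hyx⟩)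

variable (hclosed : ∀ x ∈ A, ∀ y, (y, x) ∈ F.att → y ∈ A)
include hclosed

theorem admissible_groundedOn (hA : A ⊆ F.args) : F.Admissible (F.groundedOn A wf) :=
  ⟨⟨groundedOn_subset.trans hA, fun _ ha _ hb hab => notMem_groundedOn_of_att hb hab ha⟩,
    fun a ha b hba => exists_att_of_notMem_groundedOn (hclosed a (groundedOn_subset ha) b hba)
      (notMem_groundedOn_of_att ha hba)⟩

theorem not_att_groundedOn_of_defends {S : Set α}
    (hS : ∀ s ∈ S, ∀ g ∈ F.groundedOn A wf, (g, s) ∈ F.att →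
      ∃ t ∈ S, (t, g) ∈ F.att) :
    ∀ g ∈ F.groundedOn A wf, ∀ s ∈ S, (s, g) ∉ F.att := by
  intro g
  refine wf.transGen.induction
    (C := fun g => g ∈ F.groundedOn A wf → ∀ s ∈ S, (s, g) ∉ F.att) g ?_
  intro g ih hg s hs hsg
  have hgA := groundedOn_subset hg
  have hsA := hclosed g hgA s hsg
  -- `s` is out, so some `h` in the labelling attacks it; `S` answers `h`, two attacks below `g`
  obtain ⟨h, hh, hhs⟩ := exists_att_of_notMem_groundedOn hsA (notMem_groundedOn_of_att hg hsg)
  obtain ⟨t, ht, hth⟩ := hS s hs h hh hhs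
  exact ih h (.tail (.single ⟨hhs, hsA⟩) ⟨hsg, hgA⟩) hh t ht hth

end Grounded

theorem exists_preferredExt_superset (F : ArgFramework α) {S : Set α} (hS : F.Admissible S) :
    ∃ E, F.PreferredExt E ∧ S ⊆ E := by
  have hfin : {T | F.Admissible T ∧ S ⊆ T}.Finite :=
    F.args_finite.finite_subsets.subset fun T hT => hT.1.1.1
  obtain ⟨E, ⟨hE, hSE⟩, hmax⟩ := hfin.exists_maximalFor id _ ⟨S, hS, subset_rfl⟩
  exact ⟨E, ⟨hE, fun T hT hET => hET.antisymm (hmax ⟨hT, hSE.trans hET⟩ hET)⟩, hSE⟩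

section Expansion

variable {F F' : ArgFramework α}

theorem NormalExpansion.att_of_mem_args (hN : F.NormalExpansion F') {a b : α}
    (hab : (a, b) ∈ F'.att) (ha : a ∈ F.args) (hb : b ∈ F.args) : (a, b) ∈ F.att := by
  by_contra h
  exact hN.2.2 a b hab h ⟨ha, hb⟩

theorem NormalExpansion.admissible_of_subset_args (hN : F.NormalExpansion F') {S : Set α}
    (hS : F'.Admissible S) (hSF : S ⊆ F.args) : F.Admissible S := by
  obtain ⟨⟨-, hcf⟩, hdef⟩ := hS
  refine ⟨⟨hSF, fun a ha b hb hab => hcf a ha b hb (hN.2.1 hab)⟩, fun a ha b hba => ?_⟩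
  obtain ⟨c, hc, hcb⟩ := hdef a ha b (hN.2.1 hba)
  exact ⟨c, hc, hN.att_of_mem_args hcb (hSF hc) (F.att_sub hba).1⟩

variable (F F') in
-- New arguments are included, as every argument reaches itself.
def newAncestors : Set α :=
  {x | ∃ b ∈ F'.args \ F.args, F'.Reachable x b}

theorem newAncestors_subset_args : F.newAncestors F' ⊆ F'.args :=
  fun _ ⟨_, _, hxb⟩ => hxb.mem_args

theorem mem_newAncestors_of_att :
    ∀ x ∈ F.newAncestors F', ∀ y, (y, x) ∈ F'.att → y ∈ F.newAncestors F' :=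
  fun _ ⟨b, hb, hxb⟩ _ hyx => ⟨b, hb, hxb.head hyx⟩

theorem admissible_groundedOn_newAncestors {wf : WellFounded (F'.attInto (F.newAncestors F'))} :
    F'.Admissible (F'.groundedOn (F.newAncestors F') wf) :=
  admissible_groundedOn mem_newAncestors_of_att newAncestors_subset_args

theorem RationalManExpansion.notMem_newAncestors (hRM : F.RationalManExpansion F') {l : List α}
    (hl : F'.AttackCycle l) {a : α} (ha : a ∈ l) : a ∉ F.newAncestors F' := by
  rintro ⟨b, hb, hab⟩
  have ha_old : a ∈ F.args := ((hRM.2.1.2.2 l).1 hl).2.1 a ha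
  exact hRM.2.2 a ha_old b hb hab l hl ha

theorem RationalManExpansion.wellFounded_attInto_newAncestors
    (hRM : F.RationalManExpansion F') : WellFounded (F'.attInto (F.newAncestors F')) :=
  wellFounded_attInto fun _ hl _ ha => hRM.notMem_newAncestors hl ha

/-- The new attackers of `E` are new ancestors outside the labelling, hence attacked by it. -/
theorem NormalExpansion.admissible_union_groundedOn (hN : F.NormalExpansion F')
    {wf : WellFounded (F'.attInto (F.newAncestors F'))} {E : Set α} (hE : F.Admissible E)
    (hG : F'.groundedOn (F.newAncestors F') wf ⊆ F.args) :
    F'.Admissible (E ∪ F'.groundedOn (F.newAncestors F') wf) := by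
  set G := F'.groundedOn (F.newAncestors F') wf
  obtain ⟨⟨hEF, hEcf⟩, hEdef⟩ := hE
  have hGadm : F'.Admissible G := admissible_groundedOn_newAncestors
  have hEdefG : ∀ e ∈ E, ∀ g ∈ G, (g, e) ∈ F'.att → ∃ f ∈ E, (f, g) ∈ F'.att := by
    intro e he g hg hge
    obtain ⟨f, hf, hfg⟩ := hEdef e he g (hN.att_of_mem_args hge (hG hg) (hEF he))
    exact ⟨f, hf, hN.2.1 hfg⟩
  have hEG := not_att_groundedOn_of_defends mem_newAncestors_of_att hEdefG
  refine ⟨⟨Set.union_subset (hEF.trans hN.1) hGadm.1.1, ?_⟩, ?_⟩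
  · rintro a (ha | ha) b (hb | hb) hab
    · exact hEcf a ha b hb (hN.att_of_mem_args hab (hEF ha) (hEF hb))
    · exact hEG b hb a ha hab
    · obtain ⟨f, hf, hfa⟩ := hEdefG b hb a ha hab
      exact hEG a ha f hf hfa
    · exact hGadm.1.2 a ha b hb hab
  · rintro a (ha | ha) b hba
    · by_cases hb : b ∈ F.args
      · obtain ⟨c, hc, hcb⟩ := hEdef a ha b (hN.att_of_mem_args hba hb (hEF ha))
        exact ⟨c, .inl hc, hN.2.1 hcb⟩
      · have hb' := (F'.att_sub hba).1
        have hbA : b ∈ F.newAncestors F' := ⟨b, ⟨hb', hb⟩, .refl hb'⟩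
        obtain ⟨c, hc, hcb⟩ := exists_att_of_notMem_groundedOn hbA fun hbG => hb (hG hbG)
        exact ⟨c, .inr hc, hcb⟩
    · obtain ⟨c, hc, hcb⟩ := hGadm.2 a ha b hba
      exact ⟨c, .inr hc, hcb⟩

end Expansion

end ArgFramework

/-- Rational man's expansions preserve weak reference
independence for preferred semantics: for every rational man's expansion and
every preferred extension `E` of the original framework, there is a preferred
extension `E'` of the expansion with `E' ⊄ AR` or `E' = E`. -/
theorem rational_man_expansion_preferred_weak_reference_independence
    {α : Type*} (F F' : ArgFramework α)
    (hRM : F.RationalManExpansion F') :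
    ∀ E, F.PreferredExt E →
      ∃ E', F'.PreferredExt E' ∧ (¬ E' ⊆ F.args ∨ E' = E) := by
  intro E hE
  set G := F'.groundedOn (F.newAncestors F') hRM.wellFounded_attInto_newAncestors
  by_cases hG : G ⊆ F.args
  · obtain ⟨E', hE', hsub⟩ :=
      F'.exists_preferredExt_superset (hRM.1.admissible_union_groundedOn hE.1 hG)
    by_cases hE'F : E' ⊆ F.args
    · refine ⟨E', hE', .inr (hE.2 E' (hRM.1.admissible_of_subset_args hE'.1 hE'F) ?_).symm⟩
      exact Set.subset_union_left.trans hsub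
    · exact ⟨E', hE', .inl hE'F⟩
  · obtain ⟨E', hE', hsub⟩ :=
      F'.exists_preferredExt_superset ArgFramework.admissible_groundedOn_newAncestors
    exact ⟨E', hE', .inl fun hE'F => hG (hsub.trans hE'F)⟩
end

section
/- Preference-based argumentation violates reference independence under normal expansion: there exist preference-based argumentation frameworks AF_p = (AR, Attacks, Prefs) and AF'_p = (AR', Attacks', Prefs') such that AF'_p is a normal expansion of AF_p, τ(AF'_p) ⊆ AR, and τ(AF'_p) ≠ τ(AF_p). A witness is AF_p = ({a, b, c}, {(a, b)}, {a ⪰ c, b ⪰ c}) and AF'_p = ({a, b, c, d}, {(a, b), (b, d), (d, a)}, {a ⪰ c, b ⪰ c, d ⪰ c}) (each Prefs taken together with reflexive pairs), for which τ(AF_p) = {a, c} and τ(AF'_p) = {c}. -/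
/-- A preference-based argumentation framework: a finite set of arguments,
an attack relation on those arguments, and a partial order (preference
relation) on those arguments. -/
structure PrefArgFramework (α : Type*) where
  args : Set α
  att : Set (α × α)
  prefs : Set (α × α)
  args_finite : args.Finite
  att_sub : att ⊆ args ×ˢ args
  prefs_sub : prefs ⊆ args ×ˢ args
  prefs_refl : ∀ a ∈ args, (a, a) ∈ prefs
  prefs_antisymm : ∀ a b : α, (a, b) ∈ prefs → (b, a) ∈ prefs → a = b
  prefs_trans : ∀ a b c : α, (a, b) ∈ prefs → (b, c) ∈ prefs → (a, c) ∈ prefs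

namespace PrefArgFramework

variable {α : Type*}

/-- The set of acceptable arguments of a preference-based argumentation
framework: arguments `a` such that `a ⪰ b` for every attacker `b` of `a`. -/
def tau (F : PrefArgFramework α) : Set α :=
  {a ∈ F.args | ∀ b ∈ F.args, (b, a) ∈ F.att → (a, b) ∈ F.prefs}

/-- `F'` is a normal expansion of the preference-based framework `F`:
arguments, attacks and preferences are only added, and every added attack and
every added preference pair involves at least one added argument. -/
def NormalExpansion (F F' : PrefArgFramework α) : Prop :=
  F.args ⊆ F'.args ∧ F.att ⊆ F'.att ∧ F.prefs ⊆ F'.prefs ∧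
    (∀ a b : α, (a, b) ∈ F'.att → (a, b) ∉ F.att →
      a ∈ F'.args \ F.args ∨ b ∈ F'.args \ F.args) ∧
    (∀ a b : α, (a, b) ∈ F'.prefs → (a, b) ∉ F.prefs →
      a ∈ F'.args \ F.args ∨ b ∈ F'.args \ F.args)

end PrefArgFramework

/-!
With `a, b, c, d` encoded as `0, 1, 2, 3`, both frameworks order their arguments by making `c`
the least element and leaving all other pairs incomparable. In the small framework `a` is
unattacked, hence acceptable. The new argument `d` attacks `a` and is incomparable with it, so
`a` is no longer acceptable; `d` itself is attacked by the incomparable `b`, so the only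
acceptable argument left is the unattacked `c`, which is an old argument.
-/

namespace PrefArgFramework

variable {α : Type*}

def withBottom (S : Finset α) (att : Set (α × α)) (hatt : att ⊆ (S : Set α) ×ˢ (S : Set α))
    (c : α) (hc : c ∈ S) : PrefArgFramework α where
  args := S
  att := att
  prefs := {p | p.1 ∈ S ∧ (p.2 = p.1 ∨ p.2 = c)}
  args_finite := S.finite_toSet
  att_sub := hatt
  prefs_sub := by
    rintro ⟨x, y⟩ ⟨hx, hy⟩
    exact ⟨hx, hy.elim (fun h => h ▸ hx) fun h => h ▸ hc⟩
  prefs_refl a ha := ⟨ha, .inl rfl⟩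
  prefs_antisymm := by
    rintro a b ⟨-, hba | hbc⟩ ⟨-, hab | hac⟩
    exacts [hba.symm, hba.symm, hab, hac.trans hbc.symm]
  prefs_trans := by
    rintro a b d ⟨ha, hba | hbc⟩ ⟨-, hdb | hdc⟩
    · exact ⟨ha, .inl (hdb.trans hba)⟩
    · exact ⟨ha, .inr hdc⟩
    · exact ⟨ha, .inr (hdb.trans hbc)⟩
    · exact ⟨ha, .inr hdc⟩

variable {S S' : Finset α} {att att' : Set (α × α)} {hatt : att ⊆ (S : Set α) ×ˢ (S : Set α)}
  {hatt' : att' ⊆ (S' : Set α) ×ˢ (S' : Set α)} {c : α} {hc : c ∈ S} {hc' : c ∈ S'}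

theorem mem_tau_withBottom {a : α} :
    a ∈ (withBottom S att hatt c hc).tau ↔ a ∈ S ∧ ∀ b, (b, a) ∈ att → b = a ∨ b = c :=
  and_congr_right fun ha =>
    ⟨fun h b hba => (h b (hatt hba).1 hba).2, fun h b _ hba => ⟨ha, h b hba⟩⟩

theorem normalExpansion_withBottom (hS : S ⊆ S') (hatt_sub : att ⊆ att')
    (hnew : ∀ a b, (a, b) ∈ att' → (a, b) ∉ att → a ∉ S ∨ b ∉ S) :
    (withBottom S att hatt c hc).NormalExpansion (withBottom S' att' hatt' c hc') := by
  refine ⟨Finset.coe_subset.2 hS, hatt_sub, fun p ⟨hp, hp'⟩ => ⟨hS hp, hp'⟩, ?_, ?_⟩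
  · intro a b hab hab_old
    have ⟨ha, hb⟩ := hatt' hab
    exact (hnew a b hab hab_old).imp (fun h => ⟨ha, h⟩) fun h => ⟨hb, h⟩
  · rintro a b ⟨ha, hb⟩ hab_old
    exact .inl ⟨ha, fun ha_old => hab_old ⟨ha_old, hb⟩⟩

end PrefArgFramework

open PrefArgFramework

def smallFramework : PrefArgFramework ℕ :=
  withBottom {0, 1, 2} {(0, 1)} (by simp) 2 (by simp)

def expandedFramework : PrefArgFramework ℕ :=
  withBottom {0, 1, 2, 3} {(0, 1), (1, 3), (3, 0)} (by simp [Set.insert_subset_iff]) 2 (by simp)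

theorem smallFramework_normalExpansion : smallFramework.NormalExpansion expandedFramework :=
  normalExpansion_withBottom (by decide) (by simp) (by simp; omega)

theorem tau_smallFramework : smallFramework.tau = {0, 2} := by
  ext a
  simp [smallFramework, mem_tau_withBottom]
  omega

theorem tau_expandedFramework : expandedFramework.tau = {2} := by
  ext a
  simp [expandedFramework, mem_tau_withBottom, or_imp, forall_and]
  omega

/-- Preference-based argumentation violates reference
independence under normal expansion: there are a preference-based framework
`F` and a normal expansion `F'` of it such that `τ(F') ⊆ AR` and
`τ(F') ≠ τ(F)`. -/
theorem preference_based_violates_reference_independence :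
    ∃ F F' : PrefArgFramework ℕ,
      F.NormalExpansion F' ∧
      F'.tau ⊆ F.args ∧
      F'.tau ≠ F.tau := by
  refine ⟨smallFramework, expandedFramework, smallFramework_normalExpansion, ?_, ?_⟩
  · rw [tau_expandedFramework]
    simp [smallFramework, withBottom]
  · rw [tau_expandedFramework, tau_smallFramework]
    simp [Set.ext_iff]
end
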